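/- arXiv:2308.12936 — 2 statements merged into one kernel-verified Lean document; each statement's English description precedes it below -/
import Mathlib

section
/- Let O ⊆ ℝⁿ be an open set with nonempty boundary and δ(X) = dist(X, ∂O). For a, b > 0 and (q,τ) ∈ ∂O × ℝ define the product parabolic cone Γ_a(q,τ) = {(X,t) ∈ O × ℝ : X ∈ γ̃_a(q) and |t − τ| < δ(X)²} and the standard parabolic cone Γ̂_b(q,τ) = {(X,t) ∈ O × ℝ : (|X − q|² + |t − τ|)^{1/2} < (1+b)δ(X)}. Then for every a > 0 there exists b = b(a) > 0 such that for all (q,τ) ∈ ∂O × ℝ: Γ̂_{1/b}(q,τ) ⊆ Γ_a(q,τ) ⊆ Γ̂_b(q,τ). -/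
open Metric

variable {n : ℕ}

/-- The standard corkscrew region `γ_a(q) = {X ∈ O : |X − q| < (1+a)δ(X)}`,
where `δ(X) = dist(X, ∂O)`. -/
def corkRegion (O : Set (EuclideanSpace ℝ (Fin n))) (a : ℝ)
    (q : EuclideanSpace ℝ (Fin n)) : Set (EuclideanSpace ℝ (Fin n)) :=
  {X ∈ O | dist X q < (1 + a) * infDist X (frontier O)}

/-- `S_a(Y) = {q ∈ ∂O : Y ∈ γ_a(q)}`. -/
def corkS (O : Set (EuclideanSpace ℝ (Fin n))) (a : ℝ)
    (Y : EuclideanSpace ℝ (Fin n)) : Set (EuclideanSpace ℝ (Fin n)) :=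
  {q ∈ frontier O | Y ∈ corkRegion O a q}

/-- `S̃_a(Y) = ⋃_{q ∈ S_a(Y)} {q' ∈ ∂O : |q − q'| < a δ(Y)}`. -/
def corkStilde (O : Set (EuclideanSpace ℝ (Fin n))) (a : ℝ)
    (Y : EuclideanSpace ℝ (Fin n)) : Set (EuclideanSpace ℝ (Fin n)) :=
  ⋃ q ∈ corkS O a Y, {q' ∈ frontier O | dist q q' < a * infDist Y (frontier O)}

/-- The modified corkscrew region `γ̃_a(q) = {Y ∈ O : q ∈ S̃_a(Y)}`. -/
def corkRegionTilde (O : Set (EuclideanSpace ℝ (Fin n))) (a : ℝ)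
    (q : EuclideanSpace ℝ (Fin n)) : Set (EuclideanSpace ℝ (Fin n)) :=
  {Y ∈ O | q ∈ corkStilde O a Y}

/-- The product parabolic cone
`Γ_a(q,τ) = {(X,t) ∈ O × ℝ : X ∈ γ̃_a(q) and |t − τ| < δ(X)²}`. -/
def prodCone (O : Set (EuclideanSpace ℝ (Fin n))) (a : ℝ)
    (q : EuclideanSpace ℝ (Fin n)) (τ : ℝ) : Set (EuclideanSpace ℝ (Fin n) × ℝ) :=
  {p | p.1 ∈ corkRegionTilde O a q ∧ |p.2 - τ| < (infDist p.1 (frontier O)) ^ 2}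

/-- The standard parabolic cone
`Γ̂_b(q,τ) = {(X,t) ∈ O × ℝ : (|X − q|² + |t − τ|)^{1/2} < (1+b)δ(X)}`. -/
def stdParCone (O : Set (EuclideanSpace ℝ (Fin n))) (b : ℝ)
    (q : EuclideanSpace ℝ (Fin n)) (τ : ℝ) : Set (EuclideanSpace ℝ (Fin n) × ℝ) :=
  {p | p.1 ∈ O ∧
    Real.sqrt (dist p.1 q ^ 2 + |p.2 - τ|) < (1 + b) * infDist p.1 (frontier O)}

/-- For every aperture `a > 0` there is `b = b(a) > 0` such that for all
boundary points `(q,τ) ∈ ∂O × ℝ` one has `Γ̂_{1/b}(q,τ) ⊆ Γ_a(q,τ) ⊆ Γ̂_b(q,τ)`. -/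
theorem prodCone_comparable_stdParCone (n : ℕ)
    (O : Set (EuclideanSpace ℝ (Fin n))) (hO : IsOpen O)
    (hfr : (frontier O).Nonempty) (a : ℝ) (ha : 0 < a) :
    ∃ b : ℝ, 0 < b ∧ ∀ (q : EuclideanSpace ℝ (Fin n)), q ∈ frontier O → ∀ τ : ℝ,
      stdParCone O (1 / b) q τ ⊆ prodCone O a q τ ∧
        prodCone O a q τ ⊆ stdParCone O b q τ := by
  obtain ⟨b, hb0, hca, hc3, hba⟩ :
      ∃ b : ℝ, 0 < b ∧ 1/b ≤ a ∧ 1/b ≤ 1/3 ∧ 1 + 2*a ≤ b := by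
    refine ⟨max 3 (max (1/a) (1 + 2*a)), ?_, ?_, ?_, ?_⟩
    · have := le_max_left 3 (max (1/a) (1 + 2*a)); linarith
    · have h1 : 1/a ≤ max 3 (max (1/a) (1 + 2*a)) :=
        le_trans (le_max_left _ _) (le_max_right _ _)
      have ha' : 0 < 1/a := by positivity
      rw [div_le_iff₀ (by linarith)]
      calc (1:ℝ) = a * (1/a) := by field_simp
        _ ≤ a * max 3 (max (1/a) (1 + 2*a)) := mul_le_mul_of_nonneg_left h1 ha.le
    · have h1 := le_max_left 3 (max (1/a) (1 + 2*a))
      rw [div_le_div_iff₀ (by linarith) (by norm_num)]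
      linarith
    · exact le_trans (le_max_right _ _) (le_max_right _ _)
  have hc0 : (0:ℝ) < 1/b := by positivity
  refine ⟨b, hb0, fun q hq τ => ?_⟩
  constructor
  · rintro ⟨X, t⟩ ⟨hXO, hlt⟩
    have hXO' : X ∈ O := hXO
    have hXnf : X ∉ frontier O := fun h => ((hO.frontier_eq ▸ h).2) hXO'
    have hδ : 0 < infDist X (frontier O) :=
      (IsClosed.notMem_iff_infDist_pos isClosed_frontier hfr).mp hXnf
    have hdq : infDist X (frontier O) ≤ dist X q := infDist_le_dist_of_mem hq
    have hsq : dist X q ^ 2 + |t - τ| < ((1 + 1/b) * infDist X (frontier O)) ^ 2 :=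
      Real.lt_sq_of_sqrt_lt hlt
    have habs : (0:ℝ) ≤ |t - τ| := abs_nonneg _
    have hd1 : dist X q ^ 2 < ((1 + 1/b) * infDist X (frontier O)) ^ 2 := by linarith
    have hd2 : dist X q < (1 + 1/b) * infDist X (frontier O) :=
      lt_of_pow_lt_pow_left₀ 2 (by positivity) hd1
    have hdist : dist X q < (1 + a) * infDist X (frontier O) := by
      have : (1 + 1/b) * infDist X (frontier O) ≤ (1 + a) * infDist X (frontier O) :=
        mul_le_mul_of_nonneg_right (by linarith) hδ.le
      linarith
    refine ⟨⟨hXO', ?_⟩, ?_⟩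
    · refine Set.mem_biUnion (show q ∈ corkS O a X from ⟨hq, hXO', hdist⟩) ?_
      exact ⟨hq, by simpa using mul_pos ha hδ⟩
    · have hδd : infDist X (frontier O) ^ 2 ≤ dist X q ^ 2 :=
        pow_le_pow_left₀ hδ.le hdq 2
      have hcc : (1 + 1/b)^2 ≤ 2 := by nlinarith [mul_le_mul_of_nonneg_left hc3 hc0.le]
      have h2 : ((1 + 1/b) * infDist X (frontier O)) ^ 2
          ≤ 2 * infDist X (frontier O) ^ 2 := by
        rw [mul_pow]
        exact mul_le_mul_of_nonneg_right hcc (sq_nonneg _)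
      show |t - τ| < infDist X (frontier O) ^ 2
      linarith
  · rintro ⟨X, t⟩ ⟨⟨hXO, hS⟩, ht⟩
    have hXO' : X ∈ O := hXO
    have hXnf : X ∉ frontier O := fun h => ((hO.frontier_eq ▸ h).2) hXO'
    have hδ : 0 < infDist X (frontier O) :=
      (IsClosed.notMem_iff_infDist_pos isClosed_frontier hfr).mp hXnf
    obtain ⟨q0, hq0, hq0q⟩ := Set.mem_iUnion₂.mp hS
    obtain ⟨hq0f, _, hXq0⟩ := hq0
    obtain ⟨hqf, hq0q'⟩ := hq0q
    have hdXq : dist X q < (1 + 2*a) * infDist X (frontier O) := by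
      calc dist X q ≤ dist X q0 + dist q0 q := dist_triangle _ _ _
        _ < (1 + 2*a) * infDist X (frontier O) := by
            have h1 : dist X q0 < (1 + a) * infDist X (frontier O) := hXq0
            have h2 : dist q0 q < a * infDist X (frontier O) := hq0q'
            linarith
    refine ⟨hXO', ?_⟩
    rw [Real.sqrt_lt' (by positivity)]
    have h2 : dist X q ^ 2 < ((1 + 2*a) * infDist X (frontier O)) ^ 2 :=
      pow_lt_pow_left₀ hdXq dist_nonneg (by norm_num)
    have hq1 : (1 + 2*a)^2 + 1 ≤ (1 + b)^2 := by nlinarith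
    have hq2 : ((1 + 2*a)^2 + 1) * infDist X (frontier O) ^ 2
        ≤ (1 + b)^2 * infDist X (frontier O) ^ 2 :=
      mul_le_mul_of_nonneg_right hq1 (sq_nonneg _)
    have ht' : |t - τ| < infDist X (frontier O) ^ 2 := ht
    show dist X q ^ 2 + |t - τ| < ((1 + b) * infDist X (frontier O)) ^ 2
    nlinarith [h2, hq2, ht']
end

section
/- Let w : ℝ → ℝ be a real-valued Schwartz function. Then ∫_ℝ w'(t)·(Hw)(t) dt = 2π ∫_ℝ |τ| |𝓕w(τ)|² dτ = 2π ∫_ℝ |(D^{1/2}w)(t)|² dt. In particular ∫_ℝ w'(t)·(Hw)(t) dt ≥ 0. -/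
/-!
Both identities are read off on the Fourier side. For the first, the inverse Fourier transform is
adjoint to the Fourier transform, so `∫ w' · 𝓕⁻(i sign · 𝓕w) = ∫ conj(𝓕w') · i sign · 𝓕w`, and
`𝓕w' = 2πiτ 𝓕w` turns the integrand into `2π |τ| |𝓕w|²`. For the second, `D^{1/2}w` is the inverse
Fourier transform of `G = √|τ| 𝓕w`, which is integrable and square integrable but not smooth at `0`;
Plancherel for such `G` follows from Plancherel on `L²`, once the `L²` inverse transform of `G` is
identified with the integral one by testing both against Schwartz functions.
-/

open MeasureTheory
open scoped FourierTransform

/-- Half-order time derivative: `D^{1/2}g = 𝓕⁻¹(τ ↦ |τ|^{1/2}·𝓕g(τ))`. -/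
noncomputable def halfDeriv (g : ℝ → ℂ) : ℝ → ℂ :=
  𝓕⁻ (fun τ : ℝ => ((Real.sqrt |τ| : ℝ) : ℂ) * 𝓕 g τ)

/-- Hilbert transform: `Hg = 𝓕⁻¹(τ ↦ i·sign(τ)·𝓕g(τ))`. -/
noncomputable def hilbertT (g : ℝ → ℂ) : ℝ → ℂ :=
  𝓕⁻ (fun τ : ℝ => Complex.I * ((Real.sign τ : ℝ) : ℂ) * 𝓕 g τ)

open Complex
open scoped ComplexConjugate ENNReal

section FourierIntegral

variable {V F : Type*} [NormedAddCommGroup V] [InnerProductSpace ℝ V] [FiniteDimensional ℝ V]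
  [MeasurableSpace V] [BorelSpace V] [NormedAddCommGroup F] [InnerProductSpace ℂ F]

theorem Real.continuous_fourierInv_of_integrable {G : V → F} (hG : Integrable G) :
    Continuous (𝓕⁻ G) :=
  VectorFourier.fourierIntegral_continuous Real.continuous_fourierChar continuous_inner.neg hG

variable [CompleteSpace F]

theorem Real.integral_fourierInv_smul_eq_flip {f : V → ℂ} {g : V → F} (hf : Integrable f)
    (hg : Integrable g) : ∫ ξ, 𝓕⁻ f ξ • g ξ = ∫ x, f x • 𝓕⁻ g x := by
  have h := VectorFourier.integral_fourierIntegral_smul_eq_flip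
    Real.continuous_fourierChar (L := -innerₗ V) continuous_inner.neg hf hg
  have hflip : (-innerₗ V).flip = -innerₗ V := by ext; simp [real_inner_comm]
  rwa [hflip] at h

theorem Real.integral_inner_fourier_eq_inner_fourierInv {f g : V → F} (hf : Integrable f) (hg : Integrable g) :
    ∫ ξ, inner ℂ (𝓕 f ξ) (g ξ) = ∫ x, inner ℂ (f x) (𝓕⁻ g x) := by
  have h := VectorFourier.integral_sesq_fourierIntegral_eq_neg_flip (innerSL ℂ)
    Real.continuous_fourierChar (L := innerₗ V) continuous_inner hf hg
  rwa [flip_innerₗ] at h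

theorem MeasureTheory.MemLp.coeFn_fourierInv_toLp {G : V → F} (hG : Integrable G)
    (hG₂ : MemLp G 2) : ⇑(𝓕⁻ (hG₂.toLp G) : Lp F 2 volume) =ᵐ[volume] 𝓕⁻ G := by
  refine ae_eq_of_integral_contDiff_smul_eq ((Lp.memLp _).locallyIntegrable one_le_two)
    (Real.continuous_fourierInv_of_integrable hG).locallyIntegrable fun g hg hgc ↦ ?_
  let ψ : SchwartzMap V ℂ :=
    (hgc.comp_left rfl : HasCompactSupport (ofRealCLM ∘ g)).toSchwartzMap (by fun_prop)
  calc ∫ x, g x • (𝓕⁻ (hG₂.toLp G) : Lp F 2 volume) x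
      = Lp.toTemperedDistribution (𝓕⁻ (hG₂.toLp G) : Lp F 2 volume) ψ := by
        simp [ψ, coe_smul]
    _ = Lp.toTemperedDistribution (hG₂.toLp G) (𝓕⁻ ψ) := by
        rw [← Lp.fourierInv_toTemperedDistribution_eq]; rfl
    _ = ∫ x, 𝓕⁻ ψ x • G x := by
        rw [Lp.toTemperedDistribution_apply]
        exact integral_congr_ae (by filter_upwards [hG₂.coeFn_toLp] with x hx; rw [hx])
    _ = ∫ x, g x • 𝓕⁻ G x := by
        rw [SchwartzMap.fourierInv_coe, Real.integral_fourierInv_smul_eq_flip ψ.integrable hG]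
        simp [ψ, coe_smul]

theorem Real.integral_norm_sq_fourierInv {G : V → F} (hG : Integrable G) (hG₂ : MemLp G 2) :
    ∫ x, ‖𝓕⁻ G x‖ ^ 2 = ∫ ξ, ‖G ξ‖ ^ 2 := by
  set Gl := hG₂.toLp G
  have hL2 : ∫ x, ‖(𝓕⁻ Gl : Lp F 2 volume) x‖ ^ 2 = ∫ x, ‖Gl x‖ ^ 2 := by
    have h := (Lp.fourierTransformₗᵢ V F).symm.inner_map_map Gl Gl
    rw [L2.inner_def, L2.inner_def] at h
    simp_rw [inner_self_eq_norm_sq_to_K] at h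
    exact_mod_cast h
  calc ∫ x, ‖𝓕⁻ G x‖ ^ 2 = ∫ x, ‖(𝓕⁻ Gl : Lp F 2 volume) x‖ ^ 2 :=
        integral_congr_ae (by filter_upwards [hG₂.coeFn_fourierInv_toLp hG] with x hx; rw [hx])
    _ = ∫ x, ‖Gl x‖ ^ 2 := hL2
    _ = ∫ ξ, ‖G ξ‖ ^ 2 :=
        integral_congr_ae (by filter_upwards [hG₂.coeFn_toLp] with x hx; rw [hx])

end FourierIntegral

theorem SchwartzMap.memLp_sqrt_abs_mul (φ : SchwartzMap ℝ ℂ) (p : ℝ≥0∞) :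
    MemLp (fun τ : ℝ ↦ (√|τ| : ℂ) * φ τ) p := by
  let ψ : SchwartzMap ℝ ℂ := SchwartzMap.smulLeftCLM (𝕜 := ℝ) ℂ id φ
  have hbound : MemLp (fun τ ↦ ‖φ τ‖ + ‖ψ τ‖) p := (φ.memLp p).norm.add (ψ.memLp p).norm
  refine hbound.mono' ?_ (.of_forall fun τ ↦ ?_)
  · exact (by fun_prop : Continuous fun τ : ℝ ↦ (√|τ| : ℂ) * φ τ).aestronglyMeasurable
  have hsqrt : √|τ| ≤ 1 + |τ| := by nlinarith [Real.sq_sqrt (abs_nonneg τ), Real.sqrt_nonneg |τ|]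
  simp only [ψ, SchwartzMap.smulLeftCLM_apply_apply Function.HasTemperateGrowth.id, id, norm_mul,
    norm_smul, norm_real, Real.norm_eq_abs, abs_of_nonneg (Real.sqrt_nonneg _)]
  nlinarith [norm_nonneg (φ τ)]

theorem integral_norm_sq_halfDeriv (u : SchwartzMap ℝ ℂ) :
    ∫ t, ‖halfDeriv u t‖ ^ 2 = ∫ τ, |τ| * ‖𝓕 (⇑u) τ‖ ^ 2 := by
  have hG := (𝓕 u).memLp_sqrt_abs_mul
  simp only [SchwartzMap.fourier_coe] at hG
  rw [halfDeriv, Real.integral_norm_sq_fourierInv (memLp_one_iff_integrable.1 (hG 1)) (hG 2)]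
  simp [mul_pow, Real.sq_sqrt (abs_nonneg _)]

theorem Real.self_mul_sign (x : ℝ) : x * Real.sign x = |x| := by
  rcases lt_trichotomy x 0 with h | rfl | h
  · rw [Real.sign_of_neg h, abs_of_neg h]; ring
  · simp
  · rw [Real.sign_of_pos h, abs_of_pos h]; ring

theorem Real.measurable_sign : Measurable Real.sign :=
  Measurable.ite (measurableSet_lt measurable_id measurable_const) measurable_const
    (Measurable.ite (measurableSet_lt measurable_const measurable_id) measurable_const
      measurable_const)

theorem MeasureTheory.Integrable.I_sign_mul {φ : ℝ → ℂ} (hφ : Integrable φ) :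
    Integrable (fun τ : ℝ ↦ I * (Real.sign τ : ℂ) * φ τ) := by
  refine hφ.mono ((measurable_const.mul (measurable_ofReal.comp Real.measurable_sign)
    ).aestronglyMeasurable.mul hφ.1) (.of_forall fun τ ↦ ?_)
  rcases Real.sign_apply_eq τ with h | h | h <;> simp [h]

theorem inner_two_pi_I_smul_I_sign_mul (τ : ℝ) (z : ℂ) :
    inner ℂ ((2 * Real.pi * I * τ) • z) (I * (Real.sign τ : ℂ) * z)
      = ((2 * Real.pi * (|τ| * ‖z‖ ^ 2) : ℝ) : ℂ) := by
  have hz : z * conj z = (‖z‖ ^ 2 : ℝ) := by rw [mul_conj, normSq_eq_norm_sq]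
  rw [RCLike.inner_apply, ← Real.self_mul_sign, smul_eq_mul]
  simp only [map_mul, conj_I, conj_ofReal, map_ofNat]
  push_cast at hz ⊢
  linear_combination (2 * Real.pi * τ * Real.sign τ : ℂ) * hz
    - (2 * Real.pi * τ * Real.sign τ * z * conj z : ℂ) * I_sq

theorem integral_deriv_mul_hilbertT (w : SchwartzMap ℝ ℝ) :
    ∫ t, ((deriv (fun s : ℝ ↦ w s) t : ℝ) : ℂ) * hilbertT (fun s ↦ (w s : ℂ)) t
      = ((2 * Real.pi * ∫ τ, |τ| * ‖𝓕 (fun s ↦ (w s : ℂ)) τ‖ ^ 2 : ℝ) : ℂ) := by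
  set u := w.postcompCLM ofRealCLM
  have hu : ⇑u = fun s ↦ (w s : ℂ) := rfl
  have hdu : deriv u = fun t ↦ ((deriv (fun s : ℝ ↦ w s) t : ℝ) : ℂ) :=
    funext fun t ↦ (w.differentiableAt.hasDerivAt.ofReal_comp).deriv
  have hdu_int : Integrable (deriv u) := (SchwartzMap.derivCLM ℝ ℂ u).integrable
  have hFdu : 𝓕 (deriv u) = fun τ : ℝ ↦ (2 * Real.pi * I * τ) • 𝓕 (⇑u) τ :=
    Real.fourier_deriv u.integrable u.differentiable hdu_int
  have hF : Integrable (fun τ : ℝ ↦ I * (Real.sign τ : ℂ) * 𝓕 (⇑u) τ) := by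
    simpa only [SchwartzMap.fourier_coe] using (𝓕 u).integrable.I_sign_mul
  rw [← hu, hilbertT]
  calc ∫ t, ((deriv (fun s : ℝ ↦ w s) t : ℝ) : ℂ)
          * 𝓕⁻ (fun τ ↦ I * (Real.sign τ : ℂ) * 𝓕 (⇑u) τ) t
      = ∫ t, inner ℂ (deriv u t) (𝓕⁻ (fun τ ↦ I * (Real.sign τ : ℂ) * 𝓕 (⇑u) τ) t) := by
        simp [hdu, RCLike.inner_apply, mul_comm]
    _ = ∫ τ, inner ℂ (𝓕 (deriv u) τ) (I * (Real.sign τ : ℂ) * 𝓕 (⇑u) τ) :=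
        (Real.integral_inner_fourier_eq_inner_fourierInv hdu_int hF).symm
    _ = ∫ τ, ((2 * Real.pi * (|τ| * ‖𝓕 (⇑u) τ‖ ^ 2) : ℝ) : ℂ) := by
        simp only [hFdu, inner_two_pi_I_smul_I_sign_mul]
    _ = _ := by rw [integral_complex_ofReal, integral_const_mul]

/-- For a real-valued Schwartz function `w`,
`∫ w'·Hw = 2π ∫ |τ| |𝓕w(τ)|² dτ = 2π ∫ |D^{1/2}w|² dt ≥ 0`. -/
theorem deriv_mul_hilbert_integral (w : SchwartzMap ℝ ℝ) :
    (∫ t : ℝ, ((deriv (fun s : ℝ => w s) t : ℝ) : ℂ)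
        * hilbertT (fun s => ((w s : ℝ) : ℂ)) t)
      = ((2 * Real.pi * ∫ τ : ℝ, |τ| * ‖𝓕 (fun s => ((w s : ℝ) : ℂ)) τ‖ ^ 2 : ℝ) : ℂ)
    ∧ (∫ t : ℝ, ((deriv (fun s : ℝ => w s) t : ℝ) : ℂ)
        * hilbertT (fun s => ((w s : ℝ) : ℂ)) t)
      = ((2 * Real.pi * ∫ t : ℝ, ‖halfDeriv (fun s => ((w s : ℝ) : ℂ)) t‖ ^ 2 : ℝ) : ℂ)
    ∧ 0 ≤ (∫ t : ℝ, ((deriv (fun s : ℝ => w s) t : ℝ) : ℂ)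
        * hilbertT (fun s => ((w s : ℝ) : ℂ)) t).re := by
  have hH := integral_deriv_mul_hilbertT w
  have hD : ∫ t, ‖halfDeriv (fun s ↦ (w s : ℂ)) t‖ ^ 2
      = ∫ τ, |τ| * ‖𝓕 (fun s ↦ (w s : ℂ)) τ‖ ^ 2 :=
    integral_norm_sq_halfDeriv (w.postcompCLM ofRealCLM)
  refine ⟨hH, hH.trans (by rw [hD]), ?_⟩
  rw [hH, ofReal_re]
  positivity
end
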